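/- Let d ≥ 1, p ∈ (1,∞), s ∈ (0,1), m > 1, and let Ω ⊂ ℝ^d be open and bounded. Let v₀ ∈ W^{s,p}_0(Ω) ∩ L^∞(Ω), let ε > 0, and suppose v ∈ L^∞(Ω) (extended by 0 outside Ω) satisfies ⟦v⟧^m ∈ W^{s,p}_0(Ω) and ∫_Ω (v − β(v₀))(⟦v⟧^m − v₀) dx + ε·E(⟦v⟧^m, ⟦v⟧^m − v₀) = 0. Then there is a constant C > 0, depending only on m and p, such that ‖v − β(v₀)‖_{L^{m+1}(Ω)}^{m+1} ≤ C·ε·‖v₀‖_{W^{s,p}_0(Ω)}^p. -/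

import Mathlib

open MeasureTheory ENNReal

/-! The signed power is strongly monotone, `(a - b)(⟦a⟧^m - ⟦b⟧^m) ≥ 2^{1-m} |a - b|^{m+1}`,
and `⟦β(v₀)⟧^m = v₀`, so the local term of the equation dominates
`2^{1-m} ‖v - β(v₀)‖_{m+1}^{m+1}`. By Young's inequality the nonlocal integrand satisfies
`⟦A⟧^{p-1}(A - B) ≥ |A|^p/p - |B|^p/p ≥ -|B|^p/p` with `A` the increment of `⟦v⟧^m` and `B`
that of `v₀`, so `-E(⟦v⟧^m, ⟦v⟧^m - v₀) ≤ [v₀]^p/p`. The equation then gives the estimate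
with `C = 2^{m-1}/p`. -/

/-- Signed power: `spow r x = |x|^(r-1) * x`. -/
noncomputable def spow (r x : ℝ) : ℝ := |x| ^ (r - 1) * x

/-- Fractional p-Laplacian pairing
`E(u,φ) = ∫∫ ⟦u(x)−u(y)⟧^{p−1}(φ(x)−φ(y)) |x−y|^{−(d+sp)} dx dy`. -/
noncomputable def fracPairing (d : ℕ) (s p : ℝ)
    (u φ : EuclideanSpace ℝ (Fin d) → ℝ) : ℝ :=
  ∫ z : EuclideanSpace ℝ (Fin d) × EuclideanSpace ℝ (Fin d),
    spow (p - 1) (u z.1 - u z.2) * (φ z.1 - φ z.2) / ‖z.1 - z.2‖ ^ ((d : ℝ) + s * p)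

/-- Gagliardo seminorm to the `p`-th power, as an extended nonnegative real. -/
noncomputable def gagliardo (d : ℕ) (s p : ℝ)
    (u : EuclideanSpace ℝ (Fin d) → ℝ) : ℝ≥0∞ :=
  ∫⁻ z : EuclideanSpace ℝ (Fin d) × EuclideanSpace ℝ (Fin d),
    ENNReal.ofReal (|u z.1 - u z.2| ^ p / ‖z.1 - z.2‖ ^ ((d : ℝ) + s * p))

/-- Membership in `W^{s,p}_0(Ω)`. -/
def memW0 (d : ℕ) (s p : ℝ) (Ω : Set (EuclideanSpace ℝ (Fin d)))
    (u : EuclideanSpace ℝ (Fin d) → ℝ) : Prop :=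
  Measurable u ∧ MemLp u (ENNReal.ofReal p) volume ∧
    gagliardo d s p u < ⊤ ∧ ∀ᵐ x, x ∉ Ω → u x = 0

lemma measurable_spow (r : ℝ) : Measurable (spow r) := by
  unfold spow
  fun_prop

lemma abs_spow {r : ℝ} (hr : 0 < r) (x : ℝ) : |spow r x| = |x| ^ r := by
  rcases eq_or_ne x 0 with rfl | hx
  · simp [spow, Real.zero_rpow hr.ne']
  · rw [spow, abs_mul, abs_of_nonneg (Real.rpow_nonneg (abs_nonneg x) _),
      ← Real.rpow_add_one (abs_ne_zero.2 hx), sub_add_cancel]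

lemma spow_of_nonneg {r x : ℝ} (hr : 0 < r) (hx : 0 ≤ x) : spow r x = x ^ r := by
  rw [← abs_of_nonneg hx, ← abs_spow hr, abs_of_nonneg hx, abs_of_nonneg]
  exact mul_nonneg (Real.rpow_nonneg (abs_nonneg x) _) hx

lemma spow_neg (r x : ℝ) : spow r (-x) = -spow r x := by
  simp [spow]

lemma spow_of_nonpos {r x : ℝ} (hr : 0 < r) (hx : x ≤ 0) : spow r x = -(-x) ^ r := by
  have h := spow_neg r (-x)
  rw [neg_neg] at h
  rw [h, spow_of_nonneg hr (neg_nonneg.2 hx)]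

lemma spow_mul_self {r : ℝ} (hr : 0 < r) (x : ℝ) : spow (r - 1) x * x = |x| ^ r := by
  rcases eq_or_ne x 0 with rfl | hx
  · simp [Real.zero_rpow hr.ne']
  · have hx' : |x| ≠ 0 := abs_ne_zero.2 hx
    rw [spow, mul_assoc, ← abs_mul_abs_self x, ← mul_assoc, ← Real.rpow_add_one hx',
      ← Real.rpow_add_one hx']
    ring_nf

lemma spow_spow_inv {r : ℝ} (hr : 0 < r) (t : ℝ) : spow r (spow r⁻¹ t) = t := by
  rcases eq_or_ne t 0 with rfl | ht
  · simp [spow]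
  · have h0 : 0 < |t| := abs_pos.2 ht
    have hexp : r⁻¹ * (r - 1) + (r⁻¹ - 1) = 0 := by field_simp; ring
    rw [spow, abs_spow (inv_pos.2 hr), spow, ← Real.rpow_mul h0.le, ← mul_assoc,
      ← Real.rpow_add h0, hexp, Real.rpow_zero, one_mul]

lemma MeasureTheory.MemLp.spow {α : Type*} [MeasurableSpace α] {μ : Measure α} {f : α → ℝ} {r : ℝ}
    (hr : 0 < r) (hf : MemLp f ∞ μ) : MemLp (fun x => spow r (f x)) ∞ μ := by
  refine memLp_top_of_bound ((measurable_spow r).comp_aemeasurable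
    hf.aemeasurable).aestronglyMeasurable (lpNorm f ∞ μ ^ r) ?_
  filter_upwards [ae_le_lpNorm_exponent_top hf] with x hx
  rw [Real.norm_eq_abs, abs_spow hr]
  exact Real.rpow_le_rpow (abs_nonneg _) hx hr.le

lemma Real.rpow_add_le_two_rpow_mul {m a b : ℝ} (hm : 1 ≤ m) (ha : 0 ≤ a) (hb : 0 ≤ b) :
    (a + b) ^ m ≤ 2 ^ (m - 1) * (a ^ m + b ^ m) := by
  lift a to NNReal using ha
  lift b to NNReal using hb
  exact_mod_cast NNReal.rpow_add_le_mul_rpow_add_rpow a b hm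

lemma Real.rpow_sub_le_rpow_sub_rpow {m a b : ℝ} (hm : 1 ≤ m) (hb : 0 ≤ b) (hba : b ≤ a) :
    (a - b) ^ m ≤ a ^ m - b ^ m := by
  have h := Real.add_rpow_le_rpow_add (sub_nonneg.2 hba) hb hm
  rw [sub_add_cancel] at h
  linarith

lemma two_rpow_mul_rpow_sub_le_spow_sub_spow {m a b : ℝ} (hm : 1 ≤ m) (hba : b ≤ a) :
    2 ^ (1 - m) * (a - b) ^ m ≤ spow m a - spow m b := by
  have hm0 : 0 < m := by linarith
  have hshrink : 2 ^ (1 - m) * (a - b) ^ m ≤ (a - b) ^ m :=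
    mul_le_of_le_one_left (Real.rpow_nonneg (sub_nonneg.2 hba) m)
      (Real.rpow_le_one_of_one_le_of_nonpos one_le_two (by linarith))
  rcases le_total 0 b with hb | hb
  · rw [spow_of_nonneg hm0 (hb.trans hba), spow_of_nonneg hm0 hb]
    linarith [Real.rpow_sub_le_rpow_sub_rpow hm hb hba]
  rcases le_total a 0 with ha | ha
  · rw [spow_of_nonpos hm0 ha, spow_of_nonpos hm0 hb]
    have h := Real.rpow_sub_le_rpow_sub_rpow hm (neg_nonneg.2 ha) (neg_le_neg hba)
    rw [neg_sub_neg] at h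
    linarith
  · rw [spow_of_nonneg hm0 ha, spow_of_nonpos hm0 hb, sub_eq_add_neg a, sub_neg_eq_add]
    calc 2 ^ (1 - m) * (a + -b) ^ m
        ≤ 2 ^ (1 - m) * (2 ^ (m - 1) * (a ^ m + (-b) ^ m)) := by
          gcongr
          exact Real.rpow_add_le_two_rpow_mul hm ha (neg_nonneg.2 hb)
      _ = a ^ m + (-b) ^ m := by
          rw [← mul_assoc, ← Real.rpow_add two_pos]
          norm_num

lemma two_rpow_mul_abs_sub_rpow_le_sub_mul_spow_sub {m : ℝ} (hm : 1 ≤ m) (a b : ℝ) :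
    2 ^ (1 - m) * |a - b| ^ (m + 1) ≤ (a - b) * (spow m a - spow m b) := by
  wlog hba : b ≤ a generalizing a b
  · have h := this b a (le_of_not_ge hba)
    rw [abs_sub_comm] at h
    linarith
  have hab : 0 ≤ a - b := sub_nonneg.2 hba
  rw [abs_of_nonneg hab, Real.rpow_add_one' hab (by linarith), ← mul_assoc, mul_comm (a - b)]
  exact mul_le_mul_of_nonneg_right (two_rpow_mul_rpow_sub_le_spow_sub_spow hm hba) hab

lemma neg_abs_rpow_div_le_spow_mul_sub {p : ℝ} (hp : 1 < p) (A B : ℝ) :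
    -(|B| ^ p / p) ≤ spow (p - 1) A * (A - B) := by
  have hq := Real.HolderConjugate.conjExponent hp
  have hyoung : |A| ^ (p - 1) * |B| ≤ |A| ^ p / p.conjExponent + |B| ^ p / p := by
    have h := Real.young_inequality_of_nonneg (Real.rpow_nonneg (abs_nonneg A) (p - 1))
      (abs_nonneg B) hq.symm
    rwa [← Real.rpow_mul (abs_nonneg A), hq.sub_one_mul_conj] at h
  have hAB : spow (p - 1) A * B ≤ |A| ^ (p - 1) * |B| := by
    rw [← abs_spow (by linarith), ← abs_mul]
    exact le_abs_self _
  have hdiv : |A| ^ p / p.conjExponent ≤ |A| ^ p :=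
    div_le_self (Real.rpow_nonneg (abs_nonneg A) p) hq.symm.lt.le
  rw [mul_sub, spow_mul_self (by linarith)]
  linarith

section Gagliardo

variable {d : ℕ} {s p : ℝ} {g : EuclideanSpace ℝ (Fin d) → ℝ}

lemma integrable_gagliardo_integrand (hg : Measurable g) (hfin : gagliardo d s p g < ⊤) :
    Integrable fun z : EuclideanSpace ℝ (Fin d) × EuclideanSpace ℝ (Fin d) =>
      |g z.1 - g z.2| ^ p / ‖z.1 - z.2‖ ^ ((d : ℝ) + s * p) :=
  ⟨(by fun_prop : Measurable _).aestronglyMeasurable,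
    (hasFiniteIntegral_iff_ofReal (ae_of_all _ fun _ => by positivity)).2 hfin⟩

lemma integral_gagliardo_integrand (hg : Measurable g) :
    ∫ z : EuclideanSpace ℝ (Fin d) × EuclideanSpace ℝ (Fin d),
      |g z.1 - g z.2| ^ p / ‖z.1 - z.2‖ ^ ((d : ℝ) + s * p) = (gagliardo d s p g).toReal :=
  integral_eq_lintegral_of_nonneg_ae (ae_of_all _ fun _ => by positivity)
    (by fun_prop : Measurable _).aestronglyMeasurable

lemma neg_fracPairing_sub_le (hp : 1 < p) (hg : Measurable g) (hfin : gagliardo d s p g < ⊤)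
    (u : EuclideanSpace ℝ (Fin d) → ℝ) :
    -fracPairing d s p u (fun x => u x - g x) ≤ (gagliardo d s p g).toReal / p := by
  simp only [fracPairing]
  by_cases hF : Integrable fun z : EuclideanSpace ℝ (Fin d) × EuclideanSpace ℝ (Fin d) =>
      spow (p - 1) (u z.1 - u z.2) * ((u z.1 - g z.1) - (u z.2 - g z.2)) /
        ‖z.1 - z.2‖ ^ ((d : ℝ) + s * p)
  · have hG := ((integrable_gagliardo_integrand hg hfin).div_const p).fun_neg
    have h := integral_mono hG hF fun z => by
      dsimp only
      rw [sub_sub_sub_comm, div_right_comm, ← neg_div]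
      gcongr ?_ / _
      exact neg_abs_rpow_div_le_spow_mul_sub hp _ _
    rw [integral_neg, integral_div, integral_gagliardo_integrand hg] at h
    linarith
  · rw [integral_undef hF, neg_zero]
    have : 0 < p := by linarith
    positivity

end Gagliardo

lemma two_rpow_mul_integral_abs_sub_rpow_le {α : Type*} [MeasurableSpace α] {μ : Measure α}
    [IsFiniteMeasure μ] {m : ℝ} (hm : 1 ≤ m) {v w : α → ℝ} (hv : MemLp v ∞ μ)
    (hw : MemLp w ∞ μ) :
    2 ^ (1 - m) * ∫ x, |v x - spow m⁻¹ (w x)| ^ (m + 1) ∂μ ≤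
      ∫ x, (v x - spow m⁻¹ (w x)) * (spow m (v x) - w x) ∂μ := by
  have hm0 : 0 < m := by linarith
  have hint : Integrable (fun x => (v x - spow m⁻¹ (w x)) * (spow m (v x) - w x)) μ :=
    (((hv.spow hm0).sub hw).mul (hv.sub (hw.spow (inv_pos.2 hm0)))).integrable le_top
  rw [← integral_const_mul]
  refine integral_mono_of_nonneg (ae_of_all _ fun _ => by positivity) hint
    (ae_of_all _ fun x => ?_)
  simpa only [spow_spow_inv hm0] using
    two_rpow_mul_abs_sub_rpow_le_sub_mul_spow_sub hm (v x) (spow m⁻¹ (w x))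

/-- quantitative estimate for the elliptic regularization
`v + ε(−Δ)^s_p⟦v⟧^m = β(v₀)`: `‖v − β(v₀)‖_{L^{m+1}(Ω)}^{m+1} ≤ C ε ‖v₀‖_{W^{s,p}_0}^p`
with `C` depending only on `m` and `p`. -/
theorem stmt12 (m p : ℝ) (hm : 1 < m) (hp : 1 < p) :
    ∃ C : ℝ, 0 < C ∧
      ∀ (d : ℕ), 1 ≤ d → ∀ (s : ℝ), s ∈ Set.Ioo (0 : ℝ) 1 →
      ∀ (Ω : Set (EuclideanSpace ℝ (Fin d))), IsOpen Ω → Bornology.IsBounded Ω →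
      ∀ (v₀ : EuclideanSpace ℝ (Fin d) → ℝ),
        memW0 d s p Ω v₀ → MemLp v₀ ⊤ (volume.restrict Ω) →
      ∀ (ε : ℝ), 0 < ε →
      ∀ (v : EuclideanSpace ℝ (Fin d) → ℝ),
        Measurable v → MemLp v ⊤ volume → (∀ᵐ x, x ∉ Ω → v x = 0) →
        memW0 d s p Ω (fun x => spow m (v x)) →
        ((∫ x in Ω, (v x - spow m⁻¹ (v₀ x)) * (spow m (v x) - v₀ x)) +
            ε * fracPairing d s p (fun x => spow m (v x))
              (fun x => spow m (v x) - v₀ x) = 0) →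
        (∫ x in Ω, |v x - spow m⁻¹ (v₀ x)| ^ (m + 1)) ≤
          C * ε * (gagliardo d s p v₀).toReal := by
  refine ⟨2 ^ (m - 1) / p, by positivity, ?_⟩
  rintro d - s - Ω - hΩ v₀ ⟨hv₀, -, hv₀fin, -⟩ hv₀top ε hε v - hvtop - - heq
  have : IsFiniteMeasure (volume.restrict Ω) := isFiniteMeasure_restrict.2 hΩ.measure_lt_top.ne
  have hlocal := two_rpow_mul_integral_abs_sub_rpow_le hm.le (hvtop.restrict Ω) hv₀top
  have hnonlocal := neg_fracPairing_sub_le hp hv₀ hv₀fin fun x => spow m (v x)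
  set I := ∫ x in Ω, |v x - spow m⁻¹ (v₀ x)| ^ (m + 1)
  have hI : 2 ^ (1 - m) * I ≤ ε * ((gagliardo d s p v₀).toReal / p) := by
    linarith [mul_le_mul_of_nonneg_left hnonlocal hε.le]
  calc I = 2 ^ (m - 1) * (2 ^ (1 - m) * I) := by
        rw [← mul_assoc, ← Real.rpow_add two_pos]
        norm_num
    _ ≤ 2 ^ (m - 1) * (ε * ((gagliardo d s p v₀).toReal / p)) := by gcongr
    _ = 2 ^ (m - 1) / p * ε * (gagliardo d s p v₀).toReal := by ring
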